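/- Let Γ be a rooted digraph satisfying P0, P1, P2 and P3, and let A = Aut(Γ). Then there is a system Ω = {ω_1, …, ω_s} of blocks of imprimitivity for the action of A on the first level Γ^1(α), with s ≥ 2, such that desc(ω_i) ∩ desc(ω_j) = ∅ whenever i ≠ j. -/

import Mathlib

variable {V : Type*}

/-- Directed walks of length `n` (`n`-arcs). -/
def arcOf (E : V → V → Prop) : ℕ → V → V → Prop
  | 0 => fun x y => x = y
  | n + 1 => fun x y => ∃ z, E x z ∧ arcOf E n z y

/-- Vertices reachable from `x` by a directed path of length exactly `n`. -/
def descN (E : V → V → Prop) (n : ℕ) (x : V) : Set V := {y | arcOf E n x y}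

/-- The descendant set of `x` (including `x` itself). -/
def desc (E : V → V → Prop) (x : V) : Set V := {y | ∃ n, arcOf E n x y}

theorem self_mem_desc (E : V → V → Prop) (x : V) : x ∈ desc E x := ⟨0, by simp [arcOf]⟩

def descSet (E : V → V → Prop) (S : Set V) : Set V := ⋃ x ∈ S, desc E x

theorem self_mem_descSet (E : V → V → Prop) {S : Set V} {x : V} (hx : x ∈ S) :
    x ∈ descSet E S := Set.mem_biUnion hx (self_mem_desc E x)

def outSet (E : V → V → Prop) (x : V) : Set V := {y | E x y}

def inSet (E : V → V → Prop) (x : V) : Set V := {y | E y x}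

def IsAut (E : V → V → Prop) (g : Equiv.Perm V) : Prop := ∀ x y, E x y ↔ E (g x) (g y)

def Rooted (E : V → V → Prop) (α : V) : Prop := ∀ y, y ∈ desc E α

def P0 (E : V → V → Prop) (α : V) (m : ℕ) : Prop :=
  0 < m ∧ (∀ x, (outSet E x).Finite ∧ (outSet E x).ncard = m) ∧
    ∀ s t : ℕ, s ≠ t → Disjoint (descN E s α) (descN E t α)

def P1 (E : V → V → Prop) : Prop :=
  ∀ u : V, ∃ f : desc E u ≃ V, ∀ x y : desc E u, (E x.1 y.1 ↔ E (f x) (f y))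

def P2 (E : V → V → Prop) (α : V) : Prop :=
  ∀ i : ℕ, ∀ x ∈ descN E i α, ∀ y ∈ descN E i α,
    ∃ g : Equiv.Perm V, IsAut E g ∧ g α = α ∧ g x = y

def P3 (E : V → V → Prop) (α : V) : Prop :=
  ∀ i : ℕ, (descN E i α).ncard < (descN E (i + 1) α).ncard

def EdgeTrans (E : V → V → Prop) : Prop :=
  ∀ a b c d : V, E a b → E c d → ∃ g : Equiv.Perm V, IsAut E g ∧ g a = c ∧ g b = d

def VertexTrans (E : V → V → Prop) : Prop :=
  ∀ u v : V, ∃ g : Equiv.Perm V, IsAut E g ∧ g u = v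

def NoDirectedCycles (E : V → V → Prop) : Prop :=
  ∀ s : ℕ, 1 ≤ s → ∀ x : V, ¬ arcOf E s x x

def HasPropZ {W : Type*} (E : W → W → Prop) : Prop :=
  ∃ f : W → ℤ, Function.Surjective f ∧ ∀ x y : W, E x y → f y = f x + 1

def deltaSetoid (E : V → V → Prop) (n : ℕ) : Setoid V :=
  ⟨fun u v => descN E n u = descN E n v, ⟨fun _ => rfl, Eq.symm, Eq.trans⟩⟩

def QEdge (E : V → V → Prop) (n : ℕ)
    (A B : Quotient (deltaSetoid E n)) : Prop :=
  ∃ a b : V, Quotient.mk (deltaSetoid E n) a = A ∧ Quotient.mk (deltaSetoid E n) b = B ∧ E a b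

def cls (E : V → V → Prop) (n : ℕ) (v : V) : Set V := {u | descN E n u = descN E n v}

def QEdgeSet (E : V → V → Prop) (A B : Set V) : Prop := ∃ a ∈ A, ∃ b ∈ B, E a b

def WDH (E : V → V → Prop) : Prop :=
  VertexTrans E ∧
  ∀ (X Y : Finset V) (f : descSet E (↑X : Set V) ≃ descSet E (↑Y : Set V)),
    (∀ a b : descSet E (↑X : Set V), (E a.1 b.1 ↔ E (f a).1 (f b).1)) →
    ∃ g : Equiv.Perm V, IsAut E g ∧
      ∀ (x : V) (hx : x ∈ X), g x = (f ⟨x, self_mem_descSet E (by exact_mod_cast hx)⟩).1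

def EdgeT (E : V → V → Prop) := {p : V × V // E p.1 p.2}

def reachSetoid (E : V → V → Prop) : Setoid (EdgeT E) :=
  ⟨Relation.EqvGen (fun a b => a.1.1 = b.1.1 ∨ a.1.2 = b.1.2),
    Relation.EqvGen.is_equivalence _⟩

def AlSources (E : V → V → Prop) (A : Quotient (reachSetoid E)) : Set V :=
  {v | ∃ e : EdgeT E, Quotient.mk (reachSetoid E) e = A ∧ v = e.1.1}

def AlSinks (E : V → V → Prop) (A : Quotient (reachSetoid E)) : Set V :=
  {v | ∃ e : EdgeT E, Quotient.mk (reachSetoid E) e = A ∧ v = e.1.2}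

def AlEdge (E : V → V → Prop) (A B : Quotient (reachSetoid E)) : Prop :=
  ∃ v, v ∈ AlSinks E A ∧ v ∈ AlSources E B

/-!
The blocks are the classes of first-level vertices that stay connected, ignoring orientation,
once `α` is deleted. Automorphisms fixing `α` permute them, and their descendant sets are
disjoint because every descendant of a vertex is connected to it away from `α`.

The content is that there are at least two classes. Suppose all of `Γ¹(α)` is connected in
`Γ - α`. By self-similarity (P1) the children of every vertex `w` are then connected below `w`,
so a semiwalk in `Γ - α` can be pushed below any level. The set of first-level ancestors of a
vertex grows along arcs and has at most `m` elements; by transitivity on levels (P2) every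
vertex at or below the level of a vertex with the most ancestors has equally many, so from some
level `n` on the ancestor set is constant along arcs, hence constant on the connected set of
vertices at level `≥ n + 1`. Thus every vertex of `Γ^{n+1}(α)` descends from one first-level
vertex `u`, i.e. `Γ^{n+1}(α) = Γⁿ(u)`, which has the size of `Γⁿ(α)` by P1, contradicting P3.
-/

section Arcs

variable {E : V → V → Prop}

theorem arcOf_add_iff {a b : ℕ} {x z : V} :
    arcOf E (a + b) x z ↔ ∃ y, arcOf E a x y ∧ arcOf E b y z := by
  induction a generalizing x with
  | zero => simp [arcOf]
  | succ a ih =>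
    rw [Nat.succ_add]
    simp only [arcOf, ih]
    aesop

theorem arcOf_one {x y : V} : arcOf E 1 x y ↔ E x y := by simp [arcOf]

theorem arcOf_succ_iff_right {n : ℕ} {x y : V} :
    arcOf E (n + 1) x y ↔ ∃ z, arcOf E n x z ∧ E z y := by
  simp only [arcOf_add_iff, arcOf_one]

theorem arcOf_map {W : Type*} {E' : W → W → Prop} (f : V → W) (hf : ∀ a b, E a b → E' (f a) (f b))
    {n : ℕ} {x y : V} (h : arcOf E n x y) : arcOf E' n (f x) (f y) := by
  induction n generalizing x with
  | zero => exact congrArg f h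
  | succ n ih =>
    obtain ⟨z, hxz, hzy⟩ := h
    exact ⟨f z, hf x z hxz, ih hzy⟩

theorem exists_arcOf (hchild : ∀ x, ∃ y, E x y) (n : ℕ) (x : V) : ∃ y, arcOf E n x y := by
  induction n generalizing x with
  | zero => exact ⟨x, rfl⟩
  | succ n ih =>
    obtain ⟨z, hxz⟩ := hchild x
    obtain ⟨y, hzy⟩ := ih z
    exact ⟨y, z, hxz, hzy⟩

theorem desc_trans {x y z : V} (hxy : y ∈ desc E x) (hyz : z ∈ desc E y) : z ∈ desc E x :=
  let ⟨a, ha⟩ := hxy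
  let ⟨b, hb⟩ := hyz
  ⟨a + b, arcOf_add_iff.mpr ⟨y, ha, hb⟩⟩

theorem descN_one (x : V) : descN E 1 x = outSet E x := by
  ext y
  simp [descN, outSet, arcOf]

theorem IsAut.symm {g : Equiv.Perm V} (hg : IsAut E g) : IsAut E g.symm := fun x y => by
  simpa using (hg (g.symm x) (g.symm y)).symm

end Arcs

def DisjointLevels (E : V → V → Prop) (α : V) : Prop :=
  ∀ s t : ℕ, s ≠ t → Disjoint (descN E s α) (descN E t α)

section Levels

variable {E : V → V → Prop} {α : V}

noncomputable def level (hroot : Rooted E α) (x : V) : ℕ := (hroot x).choose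

def levelsFrom (hroot : Rooted E α) (L : ℕ) : Set V := {z | L ≤ level hroot z}

theorem arcOf_level (hroot : Rooted E α) (x : V) : arcOf E (level hroot x) α x :=
  (hroot x).choose_spec

theorem eq_root_of_forall_not_edge (hroot : Rooted E α) {w : V} (hw : ∀ z, ¬ E z w) :
    w = α := by
  obtain ⟨n, hn⟩ := hroot w
  cases n with
  | zero => exact hn.symm
  | succ n =>
    obtain ⟨z, -, hzw⟩ := arcOf_succ_iff_right.mp hn
    exact absurd hzw (hw z)

variable {hroot : Rooted E α}

theorem level_eq_of_arcOf (hd : DisjointLevels E α) {n : ℕ} {x : V} (h : arcOf E n α x) :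
    level hroot x = n := by
  by_contra hne
  exact Set.disjoint_left.mp (hd _ _ hne) (arcOf_level hroot x) h

theorem level_of_arcOf (hd : DisjointLevels E α) {d : ℕ} {x y : V} (h : arcOf E d x y) :
    level hroot y = level hroot x + d :=
  level_eq_of_arcOf hd (arcOf_add_iff.mpr ⟨x, arcOf_level hroot x, h⟩)

theorem level_of_edge (hd : DisjointLevels E α) {x y : V} (h : E x y) :
    level hroot y = level hroot x + 1 :=
  level_of_arcOf hd ⟨y, h, rfl⟩

theorem one_le_level_of_edge (hd : DisjointLevels E α) {x y : V}
    (h : E x y) : 1 ≤ level hroot y := by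
  rw [level_of_edge hd h]
  omega

theorem level_root (hd : DisjointLevels E α) : level hroot α = 0 :=
  level_eq_of_arcOf hd rfl

theorem level_eq_zero_iff (hd : DisjointLevels E α) {x : V} : level hroot x = 0 ↔ x = α := by
  refine ⟨fun h => ?_, fun h => by rw [h]; exact level_root hd⟩
  have hx := arcOf_level hroot x
  rw [h] at hx
  exact hx.symm

theorem levelsFrom_one (hd : DisjointLevels E α) : levelsFrom hroot 1 = {α}ᶜ := by
  ext x
  change 1 ≤ level hroot x ↔ ¬x = α
  rw [← level_eq_zero_iff (hroot := hroot) hd]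
  omega

end Levels

def ConnectedIn (E : V → V → Prop) (S : Set V) : V → V → Prop :=
  Relation.ReflTransGen fun a b => (E a b ∨ E b a) ∧ a ∈ S ∧ b ∈ S

section Connected

variable {E : V → V → Prop} {S : Set V} {x y z : V}

@[refl]
theorem ConnectedIn.refl (x : V) : ConnectedIn E S x x := Relation.ReflTransGen.refl

theorem ConnectedIn.symm (h : ConnectedIn E S x y) : ConnectedIn E S y x := by
  have : Std.Symm fun a b => (E a b ∨ E b a) ∧ a ∈ S ∧ b ∈ S :=
    ⟨fun _ _ h => ⟨h.1.symm, h.2.2, h.2.1⟩⟩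
  exact Relation.ReflTransGen.stdSymm.symm _ _ h

theorem ConnectedIn.trans (hxy : ConnectedIn E S x y) (hyz : ConnectedIn E S y z) :
    ConnectedIn E S x z :=
  Relation.ReflTransGen.trans hxy hyz

theorem ConnectedIn.map {W : Type*} {E' : W → W → Prop} {T : Set W} (f : V → W)
    (hf : ∀ a b, E a b → E' (f a) (f b)) (hST : Set.MapsTo f S T) (h : ConnectedIn E S x y) :
    ConnectedIn E' T (f x) (f y) := by
  refine Relation.ReflTransGen.lift f (fun a b hab => ⟨?_, hST hab.2.1, hST hab.2.2⟩) _ _ h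
  exact hab.1.imp (hf a b) (hf b a)

theorem connectedIn_levelsFrom_of_arcOf {α : V} {hroot : Rooted E α} (hd : DisjointLevels E α)
    {n L : ℕ} (h : arcOf E n x y) (hx : L ≤ level hroot x) :
    ConnectedIn E (levelsFrom hroot L) x y := by
  induction n generalizing x with
  | zero => cases h; rfl
  | succ n ih =>
    obtain ⟨z, hxz, hzy⟩ := h
    have hz : L ≤ level hroot z := by rw [level_of_edge hd hxz]; omega
    exact Relation.ReflTransGen.head ⟨Or.inl hxz, hx, hz⟩ (ih hzy hz)

end Connected

section Blocks

variable {E : V → V → Prop} {α : V}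

def firstLevelBlock (E : V → V → Prop) (α u : V) : Set V := {v | E α v ∧ ConnectedIn E {α}ᶜ u v}

theorem firstLevelBlock_eq_of_connectedIn {u v : V} (h : ConnectedIn E {α}ᶜ u v) :
    firstLevelBlock E α u = firstLevelBlock E α v := by
  ext w
  exact ⟨fun hw => ⟨hw.1, h.symm.trans hw.2⟩, fun hw => ⟨hw.1, h.trans hw.2⟩⟩

theorem disjoint_firstLevelBlock {u u' : V}
    (h : firstLevelBlock E α u ≠ firstLevelBlock E α u') :
    Disjoint (firstLevelBlock E α u) (firstLevelBlock E α u') :=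
  Set.disjoint_left.mpr fun _ hw hw' =>
    h (firstLevelBlock_eq_of_connectedIn (hw.2.trans hw'.2.symm))

theorem sUnion_image_firstLevelBlock :
    ⋃₀ (firstLevelBlock E α '' outSet E α) = descN E 1 α := by
  rw [descN_one]
  ext v
  refine ⟨fun ⟨_, ⟨_, _, hω⟩, hv⟩ => (hω ▸ hv).1, fun hv => ?_⟩
  exact ⟨_, ⟨v, hv, rfl⟩, hv, .refl v⟩

theorem image_firstLevelBlock_subset {g : Equiv.Perm V} (hg : IsAut E g) (hgα : g α = α) (u : V) :
    g '' firstLevelBlock E α u ⊆ firstLevelBlock E α (g u) := by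
  rintro _ ⟨v, ⟨hαv, huv⟩, rfl⟩
  exact ⟨hgα ▸ (hg α v).1 hαv,
    huv.map g (fun a b => (hg a b).1) fun a (ha : a ≠ α) (hga : g a = α) =>
      ha (g.injective (hga.trans hgα.symm))⟩

theorem image_firstLevelBlock {g : Equiv.Perm V} (hg : IsAut E g) (hgα : g α = α) (u : V) :
    g '' firstLevelBlock E α u = firstLevelBlock E α (g u) := by
  refine (image_firstLevelBlock_subset hg hgα u).antisymm ?_
  rw [← Equiv.symm_image_subset]
  have := image_firstLevelBlock_subset hg.symm (g.symm_apply_eq.mpr hgα.symm) (g u)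
  rwa [Equiv.symm_apply_apply] at this

theorem disjoint_descSet_firstLevelBlock (hroot : Rooted E α) (hd : DisjointLevels E α) {u u' : V}
    (h : firstLevelBlock E α u ≠ firstLevelBlock E α u') :
    Disjoint (descSet E (firstLevelBlock E α u)) (descSet E (firstLevelBlock E α u')) := by
  have hjoin : ∀ {w a x : V}, a ∈ firstLevelBlock E α w → x ∈ desc E a →
      ConnectedIn E {α}ᶜ w x := by
    rintro w a x ⟨hαa, hwa⟩ ⟨n, hn⟩
    refine hwa.trans ?_
    rw [← levelsFrom_one (hroot := hroot) hd]
    exact connectedIn_levelsFrom_of_arcOf hd hn (one_le_level_of_edge hd hαa)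
  refine Set.disjoint_left.mpr fun x hx hx' => h (firstLevelBlock_eq_of_connectedIn ?_)
  obtain ⟨a, ha, hxa⟩ := Set.mem_iUnion₂.mp hx
  obtain ⟨a', ha', hxa'⟩ := Set.mem_iUnion₂.mp hx'
  exact (hjoin ha hxa).trans (hjoin ha' hxa').symm

end Blocks

section SelfSimilar

variable {E : V → V → Prop} {α : V}

theorem iso_apply_self_eq_root (hroot : Rooted E α) (hd : DisjointLevels E α) {w : V}
    (φ : desc E w ≃ V) (hφ : ∀ x y : desc E w, E x.1 y.1 ↔ E (φ x) (φ y)) :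
    φ ⟨w, self_mem_desc E w⟩ = α := by
  refine eq_root_of_forall_not_edge hroot fun z hz => ?_
  have hzw : E (φ.symm z : V) w :=
    (hφ (φ.symm z) ⟨w, self_mem_desc E w⟩).2 (by rwa [φ.apply_symm_apply])
  obtain ⟨d, hwz⟩ := (φ.symm z).2
  have h₁ := level_of_edge (hroot := hroot) hd hzw
  have h₂ := level_of_arcOf (hroot := hroot) hd hwz
  omega

theorem arcOf_iff_arcOf_iso (hroot : Rooted E α) (hd : DisjointLevels E α) {w : V}
    (φ : desc E w ≃ V) (hφ : ∀ x y : desc E w, E x.1 y.1 ↔ E (φ x) (φ y)) (n : ℕ)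
    (x : desc E w) : arcOf E n w x ↔ arcOf E n α (φ x) := by
  induction n generalizing x with
  | zero =>
    rw [← iso_apply_self_eq_root hroot hd φ hφ]
    change (⟨w, self_mem_desc E w⟩ : desc E w).1 = x.1 ↔ _
    rw [← Subtype.ext_iff]
    exact φ.apply_eq_iff_eq.symm
  | succ n ih =>
    rw [arcOf_succ_iff_right, arcOf_succ_iff_right]
    constructor
    · rintro ⟨z, hz, hzx⟩
      exact ⟨φ ⟨z, n, hz⟩, (ih ⟨z, n, hz⟩).1 hz, (hφ ⟨z, n, hz⟩ x).1 hzx⟩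
    · rintro ⟨z, hz, hzx⟩
      exact ⟨φ.symm z, (ih _).2 (by rwa [φ.apply_symm_apply]),
        (hφ _ x).2 (by rwa [φ.apply_symm_apply])⟩

theorem ncard_descN_eq (hroot : Rooted E α) (hd : DisjointLevels E α) (h1 : P1 E) (u : V)
    (n : ℕ) : (descN E n u).ncard = (descN E n α).ncard := by
  obtain ⟨φ, hφ⟩ := h1 u
  let T : Set (desc E u) := {x | arcOf E n u x}
  have hu : Subtype.val '' T = descN E n u := by
    ext y
    exact ⟨fun ⟨x, hx, hxy⟩ => hxy ▸ hx, fun hy => ⟨⟨y, n, hy⟩, hy, rfl⟩⟩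
  have hα : φ '' T = descN E n α := by
    ext y
    refine ⟨fun ⟨x, hx, hxy⟩ => hxy ▸ (arcOf_iff_arcOf_iso hroot hd φ hφ n x).1 hx, fun hy => ?_⟩
    refine ⟨φ.symm y, (arcOf_iff_arcOf_iso hroot hd φ hφ n _).2 ?_, φ.apply_symm_apply y⟩
    rwa [φ.apply_symm_apply]
  rw [← hu, ← hα, Set.ncard_image_of_injective _ Subtype.val_injective,
    Set.ncard_image_of_injective _ φ.injective]

theorem connectedIn_children (hroot : Rooted E α) (hd : DisjointLevels E α) (h1 : P1 E)
    (H1 : ∀ u v, E α u → E α v → ConnectedIn E {α}ᶜ u v) {w c c' : V} (hc : E w c)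
    (hc' : E w c') : ConnectedIn E (levelsFrom hroot (level hroot w + 1)) c c' := by
  obtain ⟨φ, hφ⟩ := h1 w
  have hφw := iso_apply_self_eq_root hroot hd φ hφ
  have hchild : ∀ {c}, E w c → ∃ hcw : c ∈ desc E w, E α (φ ⟨c, hcw⟩) := fun hc =>
    ⟨⟨1, _, hc, rfl⟩, hφw ▸ (hφ ⟨w, _⟩ ⟨_, _⟩).1 hc⟩
  obtain ⟨hcw, hαc⟩ := hchild hc
  obtain ⟨hc'w, hαc'⟩ := hchild hc'
  have hmaps :
      Set.MapsTo (fun v => (φ.symm v : V)) {α}ᶜ (levelsFrom hroot (level hroot w + 1)) := by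
    intro v (hv : v ≠ α)
    obtain ⟨d, hwv⟩ := (φ.symm v).2
    have hd0 : d ≠ 0 := by
      rintro rfl
      refine hv ?_
      rw [← φ.apply_symm_apply v, ← hφw]
      exact congrArg φ (Subtype.ext hwv.symm)
    change level hroot w + 1 ≤ level hroot (φ.symm v)
    rw [level_of_arcOf hd hwv]
    omega
  have := (H1 _ _ hαc hαc').map (fun v => (φ.symm v : V))
    (fun a b hab => (hφ _ _).2 (by simpa using hab)) hmaps
  simpa using this

end SelfSimilar

section Rerouting

variable {E : V → V → Prop} {α : V}

theorem connectedIn_levelsFrom_succ (hroot : Rooted E α) (hd : DisjointLevels E α)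
    (hchild : ∀ x, ∃ y, E x y)
    (hchildren : ∀ {w c c'}, E w c → E w c' →
      ConnectedIn E (levelsFrom hroot (level hroot w + 1)) c c')
    {L : ℕ} {x y : V} (h : ConnectedIn E (levelsFrom hroot L) x y) (hx : L < level hroot x)
    (hy : L < level hroot y) : ConnectedIn E (levelsFrom hroot (L + 1)) x y := by
  classical
  choose child hchild using hchild
  -- a semiwalk is pushed off level `L` by replacing each vertex there with one of its children
  let lift : V → V := fun z => if L < level hroot z then z else child z
  have hedge : ∀ a b, E a b → L ≤ level hroot a →
      ConnectedIn E (levelsFrom hroot (L + 1)) (lift a) (lift b) := by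
    intro a b hab ha
    have hb := level_of_edge (hroot := hroot) hd hab
    have hb' : L < level hroot b := by omega
    by_cases ha' : L < level hroot a
    · simp only [lift, if_pos ha', if_pos hb']
      exact .single ⟨Or.inl hab, ha', hb'⟩
    · simp only [lift, if_neg ha', if_pos hb']
      rw [show L = level hroot a by omega]
      exact hchildren (hchild a) hab
  have : ConnectedIn E (levelsFrom hroot (L + 1)) (lift x) (lift y) :=
    Relation.ReflTransGen.lift' lift ?_ x y h
  · simpa only [lift, if_pos hx, if_pos hy] using this
  · rintro a b ⟨hab, ha, hb⟩
    exact hab.elim (fun h => hedge a b h ha) fun h => (hedge b a h hb).symm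

theorem connectedIn_levelsFrom (hroot : Rooted E α) (hd : DisjointLevels E α)
    (hchild : ∀ x, ∃ y, E x y)
    (hchildren : ∀ {w c c'}, E w c → E w c' →
      ConnectedIn E (levelsFrom hroot (level hroot w + 1)) c c')
    {x y : V} (h : ConnectedIn E {α}ᶜ x y) {L : ℕ} (hL : 1 ≤ L) (hx : L ≤ level hroot x)
    (hy : L ≤ level hroot y) : ConnectedIn E (levelsFrom hroot L) x y := by
  induction L, hL using Nat.le_induction with
  | base => rwa [levelsFrom_one hd]
  | succ L _ ih =>
    exact connectedIn_levelsFrom_succ hroot hd hchild hchildren (ih (by omega) (by omega)) hx hy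

theorem connectedIn_compl_root (hroot : Rooted E α) (hd : DisjointLevels E α)
    (H1 : ∀ u v, E α u → E α v → ConnectedIn E {α}ᶜ u v) {x y : V} (hx : x ≠ α) (hy : y ≠ α) :
    ConnectedIn E {α}ᶜ x y := by
  have hanc : ∀ {x}, x ≠ α → ∃ u, E α u ∧ ConnectedIn E {α}ᶜ u x := by
    intro x hx
    obtain ⟨n | n, hn⟩ := hroot x
    · exact absurd hn.symm hx
    · obtain ⟨u, hu, hux⟩ := hn
      rw [← levelsFrom_one (hroot := hroot) hd]
      exact ⟨u, hu, connectedIn_levelsFrom_of_arcOf hd hux (one_le_level_of_edge hd hu)⟩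
  obtain ⟨u, hu, hux⟩ := hanc hx
  obtain ⟨v, hv, hvy⟩ := hanc hy
  exact hux.symm.trans ((H1 u v hu hv).trans hvy)

end Rerouting

section Ancestors

variable {E : V → V → Prop} {α : V}

def firstLevelAncestors (E : V → V → Prop) (α x : V) : Set V := {u | E α u ∧ x ∈ desc E u}

theorem firstLevelAncestors_mono {x y : V} (h : y ∈ desc E x) :
    firstLevelAncestors E α x ⊆ firstLevelAncestors E α y :=
  fun _ hu => ⟨hu.1, desc_trans hu.2 h⟩

theorem image_firstLevelAncestors_subset {g : Equiv.Perm V} (hg : IsAut E g) (hgα : g α = α)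
    (x : V) : g '' firstLevelAncestors E α x ⊆ firstLevelAncestors E α (g x) := by
  rintro _ ⟨u, ⟨hαu, n, hn⟩, rfl⟩
  exact ⟨hgα ▸ (hg α u).1 hαu, n, arcOf_map g (fun a b => (hg a b).1) hn⟩

theorem exists_firstLevelAncestors_stable (hroot : Rooted E α) (hfin : (outSet E α).Finite)
    (h2 : P2 E α) :
    ∃ n, ∀ a b, E a b → n ≤ level hroot a →
      firstLevelAncestors E α a = firstLevelAncestors E α b := by
  set k : V → ℕ := fun x => (firstLevelAncestors E α x).ncard
  have hfin' : ∀ x, (firstLevelAncestors E α x).Finite := fun x => hfin.subset fun _ hu => hu.1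
  have hbdd : BddAbove (Set.range k) := ⟨(outSet E α).ncard, by
    rintro _ ⟨x, rfl⟩
    exact Set.ncard_le_ncard (fun _ hu => hu.1) hfin⟩
  obtain ⟨x₀, hx₀⟩ := Nat.sSup_mem (s := Set.range k) ⟨_, α, rfl⟩ hbdd
  have hmax : ∀ x, k x ≤ k x₀ := fun x => hx₀ ▸ le_csSup hbdd ⟨x, rfl⟩
  -- every vertex below the level of `x₀` descends from an automorphic image of `x₀`
  have hdeep : ∀ y, level hroot x₀ ≤ level hroot y → k x₀ ≤ k y := by
    intro y hy
    obtain ⟨z, hαz, hzy⟩ := arcOf_add_iff.mp <| (Nat.add_sub_of_le hy).symm ▸ arcOf_level hroot y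
    obtain ⟨g, hg, hgα, hgz⟩ := h2 _ x₀ (arcOf_level hroot x₀) z hαz
    calc k x₀ = (g '' firstLevelAncestors E α x₀).ncard :=
          (Set.ncard_image_of_injective _ g.injective).symm
      _ ≤ k z := Set.ncard_le_ncard (hgz ▸ image_firstLevelAncestors_subset hg hgα x₀) (hfin' z)
      _ ≤ k y := Set.ncard_le_ncard (firstLevelAncestors_mono ⟨_, hzy⟩) (hfin' y)
  refine ⟨level hroot x₀, fun a b hab ha => ?_⟩
  exact Set.eq_of_subset_of_ncard_le (firstLevelAncestors_mono ⟨1, b, hab, rfl⟩)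
    ((hmax b).trans (hdeep a ha)) (hfin' b)

end Ancestors

theorem exists_firstLevel_not_connectedIn {E : V → V → Prop} {α : V} (hroot : Rooted E α)
    (hd : DisjointLevels E α) (hchild : ∀ x, ∃ y, E x y) (hfin : (outSet E α).Finite)
    (h1 : P1 E) (h2 : P2 E α) (h3 : P3 E α) :
    ∃ u v, E α u ∧ E α v ∧ ¬ ConnectedIn E {α}ᶜ u v := by
  by_contra! H1
  set A := firstLevelAncestors E α
  obtain ⟨n, hn⟩ := exists_firstLevelAncestors_stable hroot hfin h2
  have hconst : ∀ a b, ConnectedIn E (levelsFrom hroot (n + 1)) a b → A a = A b := by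
    intro a b h
    induction h with
    | refl => rfl
    | tail _ hbc ih =>
      obtain ⟨hbc | hcb, hb, hc⟩ := hbc
      · exact ih.trans (hn _ _ hbc (Nat.le_of_succ_le hb))
      · exact ih.trans (hn _ _ hcb (Nat.le_of_succ_le hc)).symm
  have hlevel : ∀ x y, arcOf E (n + 1) α x → arcOf E (n + 1) α y → A x = A y := by
    intro x y hx hy
    have hx' := level_eq_of_arcOf (hroot := hroot) hd hx
    have hy' := level_eq_of_arcOf (hroot := hroot) hd hy
    have hne : ∀ {z}, level hroot z = n + 1 → z ≠ α := fun hz =>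
      (level_eq_zero_iff hd).not.mp (by omega)
    refine hconst x y (connectedIn_levelsFrom hroot hd hchild ?_
      (connectedIn_compl_root hroot hd H1 (hne hx') (hne hy')) (by omega) hx'.ge hy'.ge)
    exact connectedIn_children hroot hd h1 H1
  obtain ⟨u, hu⟩ := hchild α
  have hsub : descN E (n + 1) α ⊆ descN E n u := by
    intro y hy
    obtain ⟨x, hux⟩ := exists_arcOf hchild n u
    have huy : u ∈ A y := hlevel x y ⟨u, hu, hux⟩ hy ▸ ⟨hu, n, hux⟩
    obtain ⟨d, huy⟩ := huy.2
    have := level_of_arcOf (hroot := hroot) hd huy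
    rw [level_eq_of_arcOf hd hy, level_of_edge hd hu, level_root hd] at this
    rwa [show d = n by omega] at huy
  have hsup : descN E n u ⊆ descN E (n + 1) α := fun y hy => ⟨u, hu, hy⟩
  have := h3 n
  rw [← ncard_descN_eq hroot hd h1 u n, hsub.antisymm hsup] at this
  exact lt_irrefl _ this

/-- a block system on the first level with at least two blocks and
pairwise disjoint descendant sets. -/
theorem block_system_first_level (E : V → V → Prop) (α : V) (m : ℕ)
    (hroot : Rooted E α) (h0 : P0 E α m) (h1 : P1 E) (h2 : P2 E α) (h3 : P3 E α) :
    ∃ Ω : Set (Set V),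
      (∀ ω ∈ Ω, ω.Nonempty) ∧
      (⋃₀ Ω = descN E 1 α) ∧
      (∀ ω ∈ Ω, ∀ ω' ∈ Ω, ω ≠ ω' → Disjoint ω ω') ∧
      (∀ g : Equiv.Perm V, IsAut E g → g α = α → ∀ ω ∈ Ω, (g '' ω) ∈ Ω) ∧
      2 ≤ Ω.ncard ∧
      (∀ ω ∈ Ω, ∀ ω' ∈ Ω, ω ≠ ω' → Disjoint (descSet E ω) (descSet E ω')) := by
  obtain ⟨hm, hout, hd⟩ := h0
  have hchild : ∀ x, ∃ y, E x y := fun x =>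
    Set.nonempty_of_ncard_ne_zero (s := outSet E x) (by rw [(hout x).2]; omega)
  obtain ⟨u, v, hu, hv, huv⟩ :=
    exists_firstLevel_not_connectedIn hroot hd hchild (hout α).1 h1 h2 h3
  refine ⟨firstLevelBlock E α '' outSet E α, ?_, sUnion_image_firstLevelBlock, ?_, ?_, ?_, ?_⟩
  · rintro _ ⟨w, hw, rfl⟩
    exact ⟨w, hw, .refl w⟩
  · rintro _ ⟨w, -, rfl⟩ _ ⟨w', -, rfl⟩ hne
    exact disjoint_firstLevelBlock hne
  · rintro g hg hgα _ ⟨w, hw, rfl⟩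
    exact ⟨g w, hgα ▸ (hg α w).1 hw, (image_firstLevelBlock hg hgα w).symm⟩
  · refine Set.one_lt_ncard_iff ((hout α).1.image _) |>.mpr ⟨_, _, ⟨u, hu, rfl⟩, ⟨v, hv, rfl⟩, ?_⟩
    exact fun h => huv (show v ∈ firstLevelBlock E α u from h ▸ ⟨hv, .refl v⟩).2
  · rintro _ ⟨w, -, rfl⟩ _ ⟨w', -, rfl⟩ hne
    exact disjoint_descSet_firstLevelBlock hroot hd hne
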